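/- arXiv:1904.09907 — 3 statements merged into one kernel-verified Lean document; each statement's English description precedes it below -/
import Mathlib

section
/- Let X be a zero-dimensional compact Hausdorff space and let h ∈ H(X). Then (1) the collection {⟨𝒱, Hit(𝒱,h)⟩ : 𝒱 a partition of X into clopen sets} is a local basis at h in H(X), i.e., each such set is an open neighborhood of h and every open set containing h contains one of them; and (2) if 𝒱 and 𝒲 are both partitions of X into clopen sets and 𝒲 refines 𝒱 (every member of 𝒲 is contained in a member of 𝒱), then ⟨𝒲, Hit(𝒲,h)⟩ ⊆ ⟨𝒱, Hit(𝒱,h)⟩. -/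
open Set TopologicalSpace

noncomputable section

/-- The compact-open topology on the group `H(X)` of self-homeomorphisms of `X`,
generated by the sets `V(K,U) = {h : h[K] ⊆ U}` for `K` compact and `U` open. -/
instance homeoCO {X : Type*} [TopologicalSpace X] : TopologicalSpace (X ≃ₜ X) :=
  TopologicalSpace.generateFrom
    {S : Set (X ≃ₜ X) | ∃ K U : Set X, IsCompact K ∧ IsOpen U ∧
      S = {h : X ≃ₜ X | ∀ x ∈ K, h x ∈ U}}

/-- `𝒱` is a partition of `X` into (nonempty) clopen sets. -/
def IsClopenPartition {X : Type*} [TopologicalSpace X] (𝒱 : Set (Set X)) : Prop :=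
  (∀ A ∈ 𝒱, IsClopen A ∧ A.Nonempty) ∧ 𝒱.Pairwise Disjoint ∧ ⋃₀ 𝒱 = univ

/-- The set `⟨𝒱, Hit(𝒱,h)⟩`: all `g ∈ H(X)` whose hitting digraph on `𝒱` coincides
with that of `h` (where `A → B` iff the image of `A` meets `B`). -/
def hitNbhd {X : Type*} [TopologicalSpace X] (h : X ≃ₜ X) (𝒱 : Set (Set X)) :
    Set (X ≃ₜ X) :=
  {g : X ≃ₜ X | ∀ A ∈ 𝒱, ∀ B ∈ 𝒱,
    (((⇑g '' A) ∩ B).Nonempty ↔ ((⇑h '' A) ∩ B).Nonempty)}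

/-!
The condition `g[A] ∩ B ≠ ∅` is open in `g` because `B` is open, and so is its negation
`g[A] ⊆ Bᶜ` because `A` is compact and `B` closed; a clopen partition of a compact space is
finite, so `⟨𝒱, Hit(𝒱,h)⟩` is open. Conversely, if `h[K] ⊆ V` with `K` compact and `V` open,
choose clopen sets `K ⊆ C` and `h[C] ⊆ E ⊆ V`, and let every cell of `𝒱` lie inside or
outside of `C` and of `E`. A `g` with the hitting graph of `h` sends `x ∈ K` into a cell that
`h` hits from the cell of `x`, which lies in `C`; so `g x ∈ E ⊆ V`. Finite intersections of
such subbasic sets are handled by common refinements, because refining a partition only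
shrinks `⟨𝒱, Hit(𝒱,h)⟩`: there is an edge `A → B` iff some subcell of `A` has an edge to some
subcell of `B`. Clopen partitions are produced as the fibres of discrete quotients, which
have meets.
-/

section Refinement

variable {X : Type*}

theorem image_inter_nonempty_iff_of_refines {𝒱 𝒲 : Set (Set X)} (h𝒱 : 𝒱.Pairwise Disjoint)
    (h𝒲 : ⋃₀ 𝒲 = univ) (href : ∀ W ∈ 𝒲, ∃ V ∈ 𝒱, W ⊆ V) (f : X → X) {A B : Set X}
    (hA : A ∈ 𝒱) (hB : B ∈ 𝒱) :
    (f '' A ∩ B).Nonempty ↔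
      ∃ W ∈ 𝒲, ∃ W' ∈ 𝒲, W ⊆ A ∧ W' ⊆ B ∧ (f '' W ∩ W').Nonempty := by
  have cell_subset : ∀ {x : X} {A : Set X}, A ∈ 𝒱 → x ∈ A → ∃ W ∈ 𝒲, x ∈ W ∧ W ⊆ A := by
    intro x A hA hxA
    obtain ⟨W, hW, hxW⟩ := mem_sUnion.1 (h𝒲 ▸ mem_univ x)
    obtain ⟨V, hV, hWV⟩ := href W hW
    obtain rfl : V = A := h𝒱.eq hV hA (not_disjoint_iff.2 ⟨x, hWV hxW, hxA⟩)
    exact ⟨W, hW, hxW, hWV⟩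
  constructor
  · rintro ⟨_, ⟨x, hxA, rfl⟩, hfxB⟩
    obtain ⟨W, hW, hxW, hWA⟩ := cell_subset hA hxA
    obtain ⟨W', hW', hfxW', hW'B⟩ := cell_subset hB hfxB
    exact ⟨W, hW, W', hW', hWA, hW'B, f x, mem_image_of_mem f hxW, hfxW'⟩
  · rintro ⟨W, -, W', -, hWA, hW'B, hWW'⟩
    exact hWW'.mono (inter_subset_inter (image_mono hWA) hW'B)

theorem hitNbhd_subset_of_refines [TopologicalSpace X] (h : X ≃ₜ X) {𝒱 𝒲 : Set (Set X)}
    (h𝒱 : 𝒱.Pairwise Disjoint) (h𝒲 : ⋃₀ 𝒲 = univ) (href : ∀ W ∈ 𝒲, ∃ V ∈ 𝒱, W ⊆ V) :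
    hitNbhd h 𝒲 ⊆ hitNbhd h 𝒱 := by
  intro g hg A hA B hB
  simp only [image_inter_nonempty_iff_of_refines h𝒱 h𝒲 href _ hA hB]
  exact exists_congr fun W ↦ and_congr_right fun hW ↦ exists_congr fun W' ↦
    and_congr_right fun hW' ↦ and_congr_right' <| and_congr_right' <| hg W hW W' hW'

end Refinement

section Openness

variable {X : Type*} [TopologicalSpace X]

theorem isOpen_setOf_mapsTo {K U : Set X} (hK : IsCompact K) (hU : IsOpen U) :
    IsOpen {g : X ≃ₜ X | MapsTo g K U} :=
  isOpen_generateFrom_of_mem ⟨K, U, hK, hU, rfl⟩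

theorem continuous_homeomorph_apply (x : X) : Continuous fun g : X ≃ₜ X ↦ g x :=
  continuous_def.2 fun _ hU ↦ by
    simpa [MapsTo, preimage] using isOpen_setOf_mapsTo (isCompact_singleton (x := x)) hU

theorem isClopen_setOf_image_inter_nonempty {A B : Set X} (hA : IsCompact A)
    (hB : IsClopen B) : IsClopen {g : X ≃ₜ X | (g '' A ∩ B).Nonempty} := by
  have hcompl : {g : X ≃ₜ X | (g '' A ∩ B).Nonempty}ᶜ = {g : X ≃ₜ X | MapsTo g A Bᶜ} := by
    ext g
    simp only [mem_compl_iff, mem_ofPred_eq, mapsTo_iff_image_subset,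
      subset_compl_iff_disjoint_right, disjoint_iff_inter_eq_empty, not_nonempty_iff_eq_empty]
  have hunion : {g : X ≃ₜ X | (g '' A ∩ B).Nonempty} = ⋃ x ∈ A, (fun g ↦ g x) ⁻¹' B := by
    ext g
    simp [Set.Nonempty]
  refine ⟨isOpen_compl_iff.1 ?_, ?_⟩
  · exact hcompl ▸ isOpen_setOf_mapsTo hA hB.compl.isOpen
  · exact hunion ▸ isOpen_biUnion fun x _ ↦ hB.isOpen.preimage (continuous_homeomorph_apply x)

theorem IsClopenPartition.finite [CompactSpace X] {𝒱 : Set (Set X)} (h𝒱 : IsClopenPartition 𝒱) :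
    𝒱.Finite := by
  obtain ⟨hclopen, hdisj, hcover⟩ := h𝒱
  obtain ⟨t, ht𝒱, ht, htcover⟩ := isCompact_univ.elim_finite_subcover_image
    (fun A hA ↦ (hclopen A hA).1.isOpen) (by rw [← sUnion_eq_biUnion, hcover])
  refine ht.subset fun A hA ↦ ?_
  obtain ⟨x, hxA⟩ := (hclopen A hA).2
  obtain ⟨B, hBt, hxB⟩ := mem_iUnion₂.1 (htcover (mem_univ x))
  rwa [hdisj.eq hA (ht𝒱 hBt) (not_disjoint_iff.2 ⟨x, hxA, hxB⟩)]

theorem isOpen_hitNbhd [CompactSpace X] (h : X ≃ₜ X) {𝒱 : Set (Set X)}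
    (h𝒱 : IsClopenPartition 𝒱) : IsOpen (hitNbhd h 𝒱) := by
  have hfin := h𝒱.finite
  have hEq : hitNbhd h 𝒱 = ⋂ A ∈ 𝒱, ⋂ B ∈ 𝒱,
      {g : X ≃ₜ X | (g '' A ∩ B).Nonempty ↔ (h '' A ∩ B).Nonempty} := by
    ext g
    simp [hitNbhd]
  rw [hEq]
  refine hfin.isOpen_biInter fun A hA ↦ hfin.isOpen_biInter fun B hB ↦ ?_
  have hAB := isClopen_setOf_image_inter_nonempty (h𝒱.1 A hA).1.isClosed.isCompact (h𝒱.1 B hB).1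
  by_cases hh : (h '' A ∩ B).Nonempty
  · simp only [hh, iff_true]
    exact hAB.isOpen
  · simp only [hh, iff_false]
    exact hAB.compl.isOpen

end Openness

namespace DiscreteQuotient

variable {X : Type*} [TopologicalSpace X]

def fibers (Q : DiscreteQuotient X) : Set (Set X) :=
  range fun q : Q ↦ Q.proj ⁻¹' {q}

theorem isClopenPartition_fibers (Q : DiscreteQuotient X) : IsClopenPartition Q.fibers := by
  refine ⟨?_, ?_, ?_⟩
  · rintro _ ⟨q, rfl⟩
    exact ⟨Q.isClopen_preimage _, Q.proj_surjective q⟩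
  · rintro _ ⟨q, rfl⟩ _ ⟨q', rfl⟩ hne
    exact (disjoint_singleton.2 fun hq ↦ hne (by rw [hq])).preimage Q.proj
  · exact eq_univ_of_forall fun x ↦ ⟨_, ⟨Q.proj x, rfl⟩, rfl⟩

theorem hitNbhd_fibers_anti (h : X ≃ₜ X) {Q Q' : DiscreteQuotient X} (hQ : Q ≤ Q') :
    hitNbhd h Q.fibers ⊆ hitNbhd h Q'.fibers := by
  refine hitNbhd_subset_of_refines h (isClopenPartition_fibers Q').2.1
    (isClopenPartition_fibers Q).2.2 ?_
  rintro _ ⟨q, rfl⟩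
  exact ⟨_, ⟨ofLE hQ q, rfl⟩, fiber_subset_ofLE hQ q⟩

theorem exists_proj_eq_of_mem_hitNbhd {h g : X ≃ₜ X} {Q : DiscreteQuotient X}
    (hg : g ∈ hitNbhd h Q.fibers) (x : X) :
    ∃ a, Q.proj a = Q.proj x ∧ Q.proj (h a) = Q.proj (g x) := by
  have hedge := (hg _ ⟨Q.proj x, rfl⟩ _ ⟨Q.proj (g x), rfl⟩).1
    ⟨g x, mem_image_of_mem g rfl, rfl⟩
  obtain ⟨_, ⟨a, hax, rfl⟩, hab⟩ := hedge
  exact ⟨a, hax, hab⟩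

theorem mem_iff_of_le_ofIsClopen {C : Set X} (hC : IsClopen C) {Q : DiscreteQuotient X}
    (hQ : Q ≤ ofIsClopen hC) {x y : X} (hxy : Q.proj x = Q.proj y) : x ∈ C ↔ y ∈ C :=
  hQ (Quotient.exact' hxy)

variable [CompactSpace X] [T2Space X] [TotallyDisconnectedSpace X]

theorem exists_hitNbhd_fibers_subset_setOf_mapsTo (h : X ≃ₜ X) {K V : Set X}
    (hK : IsCompact K) (hV : IsOpen V) (hKV : MapsTo h K V) :
    ∃ Q : DiscreteQuotient X, hitNbhd h Q.fibers ⊆ {g | MapsTo g K V} := by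
  obtain ⟨C, hC, hKC, hCV⟩ :=
    exists_clopen_of_closed_subset_open hK.isClosed (hV.preimage h.continuous) hKV
  obtain ⟨E, hE, hCE, hEV⟩ := exists_clopen_of_closed_subset_open
    (h.isClosedMap C hC.isClosed) hV (image_subset_iff.2 hCV)
  refine ⟨ofIsClopen hC ⊓ ofIsClopen hE, fun g hg x hx ↦ hEV ?_⟩
  obtain ⟨a, hax, hga⟩ := exists_proj_eq_of_mem_hitNbhd hg x
  have haC : a ∈ C := (mem_iff_of_le_ofIsClopen hC inf_le_left hax).2 (hKC hx)
  exact (mem_iff_of_le_ofIsClopen hE inf_le_right hga).1 (hCE (mem_image_of_mem h haC))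

theorem exists_hitNbhd_fibers_subset (h : X ≃ₜ X) {U : Set (X ≃ₜ X)} (hU : IsOpen U)
    (hhU : h ∈ U) : ∃ Q : DiscreteQuotient X, hitNbhd h Q.fibers ⊆ U := by
  obtain ⟨_, ⟨F, ⟨hF, hFsub⟩, rfl⟩, hhF, hFU⟩ :=
    (isTopologicalBasis_of_subbasis rfl).exists_subset_of_mem_open hhU hU
  have hsub : ∀ S : F, ∃ Q : DiscreteQuotient X, hitNbhd h Q.fibers ⊆ S := by
    rintro ⟨S, hS⟩
    obtain ⟨K, V, hK, hV, rfl⟩ := hFsub hS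
    exact exists_hitNbhd_fibers_subset_setOf_mapsTo h hK hV (hhF _ hS)
  choose Qs hQs using hsub
  have : Finite F := hF.to_subtype
  obtain ⟨Q, hQ⟩ := Finite.exists_ge Qs
  exact ⟨Q, fun g hg ↦ hFU <| mem_sInter.2 fun S hS ↦
    hQs ⟨S, hS⟩ (hitNbhd_fibers_anti h (hQ ⟨S, hS⟩) hg)⟩

end DiscreteQuotient

/-- For a zero-dimensional compact Hausdorff space `X` and `h ∈ H(X)`:
(1) the sets `⟨𝒱, Hit(𝒱,h)⟩`, for `𝒱` a partition of `X` into clopen sets, form a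
local basis at `h` in `H(X)`; (2) if `𝒲` refines `𝒱` then
`⟨𝒲, Hit(𝒲,h)⟩ ⊆ ⟨𝒱, Hit(𝒱,h)⟩`. -/
theorem stmt_3 (X : Type*) [TopologicalSpace X] [CompactSpace X] [T2Space X]
    [TotallyDisconnectedSpace X] (h : X ≃ₜ X) :
    ((∀ 𝒱 : Set (Set X), IsClopenPartition 𝒱 →
        h ∈ hitNbhd h 𝒱 ∧ IsOpen (hitNbhd h 𝒱)) ∧
      (∀ U : Set (X ≃ₜ X), IsOpen U → h ∈ U →
        ∃ 𝒱 : Set (Set X), IsClopenPartition 𝒱 ∧ hitNbhd h 𝒱 ⊆ U)) ∧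
    (∀ 𝒱 𝒲 : Set (Set X), IsClopenPartition 𝒱 → IsClopenPartition 𝒲 →
      (∀ W ∈ 𝒲, ∃ V ∈ 𝒱, W ⊆ V) → hitNbhd h 𝒲 ⊆ hitNbhd h 𝒱) := by
  refine ⟨⟨fun 𝒱 h𝒱 ↦ ⟨fun _ _ _ _ ↦ Iff.rfl, isOpen_hitNbhd h h𝒱⟩, fun U hU hhU ↦ ?_⟩,
    fun 𝒱 𝒲 h𝒱 h𝒲 href ↦ hitNbhd_subset_of_refines h h𝒱.2.1 h𝒲.2.2 href⟩
  obtain ⟨Q, hQ⟩ := DiscreteQuotient.exists_hitNbhd_fibers_subset h hU hhU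
  exact ⟨Q.fibers, Q.isClopenPartition_fibers, hQ⟩
end
end

section
/- Let X be a zero-dimensional compact Hausdorff space. The map h ↦ h^st, where h^st(A) = h[A] for each clopen A ⊆ X, is a homeomorphism from H(X) (with the compact-open topology) onto the group Aut(clop(X)) of Boolean-algebra automorphisms of the Boolean algebra of clopen subsets of X, where Aut(clop(X)) carries the topology of pointwise convergence, i.e., the topology generated by the sets {φ ∈ Aut(clop(X)) : φ(a) = b} for clopen a, b ⊆ X. -/
open Set TopologicalSpace

noncomputable section

/-- The topology of pointwise convergence on the automorphism group of the Boolean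
algebra of clopen subsets of `X`, generated by the sets `{φ : φ(a) = b}`. -/
instance autClopensTop {X : Type*} [TopologicalSpace X] :
    TopologicalSpace (Clopens X ≃o Clopens X) :=
  TopologicalSpace.generateFrom
    {S : Set (Clopens X ≃o Clopens X) | ∃ a b : Clopens X,
      S = {φ : Clopens X ≃o Clopens X | φ a = b}}

/-- The dual map `h ↦ h^st` sending a self-homeomorphism of `X` to the induced
automorphism `A ↦ h[A]` of the Boolean algebra of clopen sets of `X`. -/
def stMap {X : Type*} [TopologicalSpace X] (h : X ≃ₜ X) :
    Clopens X ≃o Clopens X where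
  toFun A := ⟨⇑h '' (A : Set X), by
    rw [show ⇑h '' (A : Set X) = ⇑h.symm ⁻¹' (A : Set X) from
      h.toEquiv.image_eq_preimage_symm (A : Set X)]
    exact A.2.preimage h.symm.continuous⟩
  invFun B := ⟨⇑h.symm '' (B : Set X), by
    rw [show ⇑h.symm '' (B : Set X) = ⇑h ⁻¹' (B : Set X) from
      h.symm.toEquiv.image_eq_preimage_symm (B : Set X)]
    exact B.2.preimage h.continuous⟩
  left_inv A := by ext x; simp
  right_inv B := by ext x; simp
  map_rel_iff' {A B} := by
    simp only [Equiv.coe_fn_mk, ← SetLike.coe_subset_coe]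
    exact Set.image_subset_image_iff h.injective

/-! Every automorphism `φ` of the clopen algebra comes from a unique homeomorphism: by compactness
the clopens `φ A` with `x ∈ A` have a common point `y`, and as `φ` preserves complements,
`y ∈ φ A ↔ x ∈ A` for every clopen `A`. Clopens separate points, so this determines `y`, makes
`x ↦ y` continuous and inverse to the map built from `φ⁻¹`, and shows `h^st` determines `h`.

`h ↦ h^st` is continuous because `h^st a = b` says that `h` maps `a` into `b` and `aᶜ` into `bᶜ`,
and clopens are compact. Its inverse is continuous because a compact `h[K]` inside an open `U` lies
in a clopen `C ⊆ U`, and then `ψ (h⁻¹ C) = C` is an open condition on `ψ` forcing `h[K] ⊆ U`. -/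

section StoneDuality

variable {X : Type*} [TopologicalSpace X]

lemma eq_of_forall_clopens_mem_iff [TotallySeparatedSpace X] {x y : X}
    (h : ∀ U : Clopens X, x ∈ U ↔ y ∈ U) : x = y := by
  by_contra hne
  obtain ⟨U, hU, hxU, hyU⟩ := exists_isClopen_of_totally_separated hne
  exact hyU ((h ⟨U, hU⟩).1 hxU)

lemma isOpen_setOf_homeomorph_mapsTo {K U : Set X} (hK : IsCompact K) (hU : IsOpen U) :
    IsOpen {h : X ≃ₜ X | MapsTo h K U} :=
  isOpen_generateFrom_of_mem ⟨K, U, hK, hU, rfl⟩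

lemma isOpen_setOf_orderIso_apply_eq (a b : Clopens X) :
    IsOpen {φ : Clopens X ≃o Clopens X | φ a = b} :=
  isOpen_generateFrom_of_mem ⟨a, b, rfl⟩

lemma coe_stMap_apply (h : X ≃ₜ X) (A : Clopens X) : (stMap h A : Set X) = h '' A := rfl

lemma stMap_apply_eq_iff {h : X ≃ₜ X} {a b : Clopens X} :
    stMap h a = b ↔ MapsTo h a b ∧ MapsTo h (a : Set X)ᶜ (b : Set X)ᶜ := by
  rw [← SetLike.coe_set_eq, coe_stMap_apply, Subset.antisymm_iff, image_subset_iff]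
  refine and_congr_right fun _ =>
    ⟨fun hsurj => SurjOn.mapsTo_compl hsurj h.injective, fun hcompl => ?_⟩
  have hsurj := hcompl.surjOn_compl h.surjective
  rwa [compl_compl, compl_compl] at hsurj

lemma continuous_stMap [CompactSpace X] : Continuous (stMap (X := X)) := by
  refine continuous_generateFrom_iff.2 ?_
  rintro _ ⟨a, b, rfl⟩
  have hpre : stMap ⁻¹' {φ | φ a = b} =
      {h : X ≃ₜ X | MapsTo h a b} ∩ {h | MapsTo h (a : Set X)ᶜ (b : Set X)ᶜ} :=
    Set.ext fun _ => stMap_apply_eq_iff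
  rw [hpre]
  exact (isOpen_setOf_homeomorph_mapsTo a.isClosed.isCompact b.isOpen).inter
    (isOpen_setOf_homeomorph_mapsTo a.isClopen.compl.isClosed.isCompact b.isClopen.compl.isOpen)

section PointMap

variable [CompactSpace X] (φ : Clopens X ≃o Clopens X)

lemma exists_forall_mem_orderIso_apply (x : X) : ∃ y, ∀ A : Clopens X, x ∈ A → y ∈ φ A := by
  have : Nonempty {A : Clopens X // x ∈ A} := ⟨⟨⊤, mem_univ x⟩⟩
  obtain ⟨y, hy⟩ := IsCompact.nonempty_iInter_of_directed_nonempty_isCompact_isClosed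
    (fun A : {A : Clopens X // x ∈ A} => (φ A : Set X))
    (fun A B => ⟨⟨A ⊓ B, A.2, B.2⟩, φ.monotone inf_le_left, φ.monotone inf_le_right⟩)
    (fun A => nonempty_iff_ne_empty.2 fun hempty => by
      have hA : A.1 = ⊥ := φ.injective ((Clopens.ext hempty).trans φ.map_bot.symm)
      exact (hA ▸ A.2 : x ∈ (⊥ : Clopens X)))
    (fun A => (φ A).isClosed.isCompact) (fun A => (φ A).isClosed)
  exact ⟨y, fun A hA => mem_iInter.1 hy ⟨A, hA⟩⟩

def stPointMap (x : X) : X := (exists_forall_mem_orderIso_apply φ x).choose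

lemma stPointMap_mem_apply_iff (x : X) (A : Clopens X) : stPointMap φ x ∈ φ A ↔ x ∈ A := by
  have hspec := (exists_forall_mem_orderIso_apply φ x).choose_spec
  refine ⟨fun hA => by_contra fun hnA => ?_, hspec A⟩
  have hAc : stPointMap φ x ∈ φ Aᶜ := hspec Aᶜ hnA
  rw [map_compl'] at hAc
  exact hAc hA

end PointMap

section TotallySeparated

variable [CompactSpace X] [TotallySeparatedSpace X]

lemma stPointMap_eq_of_forall_mem_iff {φ : Clopens X ≃o Clopens X} {f : X → X}
    (hf : ∀ x A, f x ∈ φ A ↔ x ∈ A) : stPointMap φ = f := by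
  ext x
  refine eq_of_forall_clopens_mem_iff fun B => ?_
  have hB := (stPointMap_mem_apply_iff φ x (φ.symm B)).trans (hf x (φ.symm B)).symm
  rwa [φ.apply_symm_apply] at hB

lemma stPointMap_symm_stPointMap (φ : Clopens X ≃o Clopens X) (x : X) :
    stPointMap φ.symm (stPointMap φ x) = x := by
  refine eq_of_forall_clopens_mem_iff fun B => ?_
  rw [← φ.symm_apply_apply B, stPointMap_mem_apply_iff, stPointMap_mem_apply_iff,
    φ.symm_apply_apply]

lemma continuous_stPointMap (φ : Clopens X ≃o Clopens X) : Continuous (stPointMap φ) := by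
  refine isTopologicalBasis_isClopen.continuous_iff.2 fun s hs => ?_
  have hpre : stPointMap φ ⁻¹' s = φ.symm ⟨s, hs⟩ := by
    ext x
    have hx := stPointMap_mem_apply_iff φ x (φ.symm ⟨s, hs⟩)
    rw [φ.apply_symm_apply] at hx
    exact hx
  rw [hpre]
  exact (φ.symm ⟨s, hs⟩).isOpen

def stHomeo (φ : Clopens X ≃o Clopens X) : X ≃ₜ X where
  toFun := stPointMap φ
  invFun := stPointMap φ.symm
  left_inv := stPointMap_symm_stPointMap φ
  right_inv x := by simpa only [OrderIso.symm_symm] using stPointMap_symm_stPointMap φ.symm x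
  continuous_toFun := continuous_stPointMap φ
  continuous_invFun := continuous_stPointMap φ.symm

lemma stMap_stHomeo (φ : Clopens X ≃o Clopens X) : stMap (stHomeo φ) = φ := by
  refine DFunLike.ext _ _ fun A => ?_
  refine stMap_apply_eq_iff.2 ⟨fun x hx => ?_, fun x hx hφ => hx ?_⟩
  · exact (stPointMap_mem_apply_iff φ x A).2 hx
  · exact (stPointMap_mem_apply_iff φ x A).1 hφ

lemma stHomeo_stMap (h : X ≃ₜ X) : stHomeo (stMap h) = h :=
  Homeomorph.ext <| congrFun <|
    stPointMap_eq_of_forall_mem_iff fun _ _ => h.injective.mem_set_image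

lemma continuous_stHomeo : Continuous (stHomeo (X := X)) := by
  refine continuous_generateFrom_iff.2 ?_
  rintro _ ⟨K, U, hK, hU, rfl⟩
  refine isOpen_iff_forall_mem_open.2 fun φ hφ => ?_
  obtain ⟨C, hC, hKC, hCU⟩ := exists_clopen_of_closed_subset_open
    (hK.image (stHomeo φ).continuous).isClosed hU (image_subset_iff.2 hφ)
  set A := φ.symm ⟨C, hC⟩
  refine ⟨{ψ | ψ A = φ A}, fun ψ hψ x hx => hCU ?_, isOpen_setOf_orderIso_apply_eq A (φ A), rfl⟩
  have hxA : x ∈ A := (stPointMap_mem_apply_iff φ x A).1 <| by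
    rw [φ.apply_symm_apply]; exact hKC (mem_image_of_mem _ hx)
  have hψx := (stPointMap_mem_apply_iff ψ x A).2 hxA
  rwa [show ψ A = φ A from hψ, φ.apply_symm_apply] at hψx

def stMapHomeomorph : (X ≃ₜ X) ≃ₜ (Clopens X ≃o Clopens X) where
  toFun := stMap
  invFun := stHomeo
  left_inv := stHomeo_stMap
  right_inv := stMap_stHomeo
  continuous_toFun := continuous_stMap
  continuous_invFun := continuous_stHomeo

end TotallySeparated

end StoneDuality

/-- For a zero-dimensional compact Hausdorff space `X`, the map `h ↦ h^st` is a
homeomorphism from `H(X)` with the compact-open topology onto the automorphism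
group of the Boolean algebra of clopen subsets of `X` with the topology of
pointwise convergence. -/
theorem stmt_4 (X : Type*) [TopologicalSpace X] [CompactSpace X] [T2Space X]
    [TotallyDisconnectedSpace X] :
    IsHomeomorph (fun h : X ≃ₜ X => stMap h) :=
  stMapHomeomorph.isHomeomorph
end
end

section
/- Let X be a zero-dimensional compact Hausdorff space. A homeomorphism h ∈ H(X) is chain transitive if and only if for every clopen set A ⊆ X with A ≠ ∅ and A ≠ X, we have h[A] ⊄ A. -/
open Set TopologicalSpace

noncomputable section

def ChainTransitive {X : Type*} [TopologicalSpace X] (h : X → X) : Prop :=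
  ∀ a b : X, ∀ 𝒰 : Set (Set X), (∀ U ∈ 𝒰, IsOpen U) → ⋃₀ 𝒰 = univ →
    ∃ n : ℕ, 1 ≤ n ∧ ∃ x : ℕ → X, x 0 = a ∧ x n = b ∧
      ∀ i < n, ∃ U ∈ 𝒰, h (x i) ∈ U ∧ x (i + 1) ∈ U

/-!
A proper nonempty clopen `A` with `h[A] ⊆ A` traps every `{A, Aᶜ}`-chain starting in `A`,
so it obstructs chain transitivity. Conversely, refine an open cover to a finite clopen
cover `𝒱`: the set of points reachable from `a` by a `𝒱`-chain is a finite union of members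
of `𝒱`, hence clopen; it contains `h a` and is mapped into itself by `h`, so it is all of `X`.
-/

theorem Relation.transGen_iff_exists_seq {α : Type*} {r : α → α → Prop} {a b : α} :
    Relation.TransGen r a b ↔
      ∃ n : ℕ, 1 ≤ n ∧ ∃ x : ℕ → α, x 0 = a ∧ x n = b ∧ ∀ i < n, r (x i) (x (i + 1)) := by
  constructor
  · intro hab
    induction hab with
    | single hab =>
      exact ⟨1, le_rfl, fun i => if i = 0 then a else _, rfl, rfl, fun i hi => by
        obtain rfl : i = 0 := by omega
        simpa using hab⟩
    | @tail b c _ hbc ih =>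
      obtain ⟨n, hn, x, hx0, hxn, hx⟩ := ih
      refine ⟨n + 1, by omega, Function.update x (n + 1) c, by simp [hx0], by simp, ?_⟩
      intro i hi
      rw [Function.update_of_ne (by omega)]
      rcases Nat.lt_succ_iff_lt_or_eq.1 hi with hi | rfl
      · rw [Function.update_of_ne (by omega)]
        exact hx i hi
      · simpa [hxn] using hbc
  · rintro ⟨n, hn, x, rfl, rfl, hx⟩
    exact .head' (hx 0 (by omega)) <| ReflTransGen.lift x (r := fun i j => r (x i) (x j))
      (fun _ _ => id) _ _ (reflTransGen_of_succ_of_le _ (fun i hi => hx i hi.2) hn)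

theorem TopologicalSpace.IsTopologicalBasis.exists_finite_refinement {X : Type*}
    [TopologicalSpace X] [CompactSpace X] {B : Set (Set X)} (hB : IsTopologicalBasis B)
    {𝒰 : Set (Set X)} (hopen : ∀ U ∈ 𝒰, IsOpen U) (hcov : ⋃₀ 𝒰 = univ) :
    ∃ 𝒱 ⊆ B, 𝒱.Finite ∧ ⋃₀ 𝒱 = univ ∧ ∀ V ∈ 𝒱, ∃ U ∈ 𝒰, V ⊆ U := by
  set 𝒲 := {V ∈ B | ∃ U ∈ 𝒰, V ⊆ U}
  have h𝒲 : univ ⊆ ⋃ V ∈ 𝒲, id V := by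
    intro x _
    obtain ⟨U, hU, hxU⟩ := mem_sUnion.1 (hcov ▸ mem_univ x)
    obtain ⟨V, hVB, hxV, hVU⟩ := hB.exists_subset_of_mem_open hxU (hopen U hU)
    exact mem_biUnion ⟨hVB, U, hU, hVU⟩ hxV
  obtain ⟨𝒱, h𝒱𝒲, h𝒱fin, h𝒱cov⟩ :=
    isCompact_univ.elim_finite_subcover_image (fun V hV => hB.isOpen hV.1) h𝒲
  refine ⟨𝒱, fun V hV => (h𝒱𝒲 hV).1, h𝒱fin, ?_, fun V hV => (h𝒱𝒲 hV).2⟩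
  rw [sUnion_eq_biUnion]
  exact univ_subset_iff.1 h𝒱cov

section ChainStep

variable {X : Type*} {h : X → X} {𝒰 𝒱 : Set (Set X)}

def ChainStep (h : X → X) (𝒰 : Set (Set X)) (x y : X) : Prop :=
  ∃ U ∈ 𝒰, h x ∈ U ∧ y ∈ U

theorem chainTransitive_iff_transGen [TopologicalSpace X] :
    ChainTransitive h ↔ ∀ a b : X, ∀ 𝒰 : Set (Set X), (∀ U ∈ 𝒰, IsOpen U) → ⋃₀ 𝒰 = univ →
      Relation.TransGen (ChainStep h 𝒰) a b := by
  simp only [ChainTransitive, Relation.transGen_iff_exists_seq, ChainStep]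

theorem ChainStep.mono (h𝒱𝒰 : ∀ V ∈ 𝒱, ∃ U ∈ 𝒰, V ⊆ U) : ChainStep h 𝒱 ≤ ChainStep h 𝒰 := by
  rintro x y ⟨V, hV, hxV, hyV⟩
  obtain ⟨U, hU, hVU⟩ := h𝒱𝒰 V hV
  exact ⟨U, hU, hVU hxV, hVU hyV⟩

theorem chainStep_apply_self (hcov : ⋃₀ 𝒰 = univ) (x : X) : ChainStep h 𝒰 x (h x) := by
  obtain ⟨U, hU, hxU⟩ := mem_sUnion.1 (hcov ▸ mem_univ (h x))
  exact ⟨U, hU, hxU, hxU⟩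

theorem mem_of_transGen_chainStep_of_mapsTo {A : Set X} (hA : MapsTo h A A) {x y : X}
    (hxy : Relation.TransGen (ChainStep h {A, Aᶜ}) x y) (hx : x ∈ A) : y ∈ A := by
  have step : ∀ {x y}, ChainStep h {A, Aᶜ} x y → x ∈ A → y ∈ A := by
    rintro x y ⟨U, hU | hU, hxU, hyU⟩ hx <;> subst hU
    exacts [hyU, absurd (hA hx) hxU]
  induction hxy with
  | single hxy => exact step hxy hx
  | tail _ hyz ih => exact step hyz ih

theorem ChainTransitive.not_mapsTo [TopologicalSpace X] (hct : ChainTransitive h) {A : Set X}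
    (hA : IsClopen A) (hne : A.Nonempty) (hA_ne_univ : A ≠ univ) : ¬MapsTo h A A := by
  intro hmaps
  obtain ⟨a, ha⟩ := hne
  obtain ⟨b, hb⟩ := nonempty_compl.2 hA_ne_univ
  refine hb (mem_of_transGen_chainStep_of_mapsTo hmaps ?_ ha)
  refine chainTransitive_iff_transGen.1 hct a b _ ?_ (sUnion_pair A Aᶜ ▸ union_compl_self A)
  rintro U (rfl | rfl)
  exacts [hA.isOpen, hA.compl.isOpen]

theorem mapsTo_setOf_transGen_chainStep (hcov : ⋃₀ 𝒱 = univ) (a : X) :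
    MapsTo h {b | Relation.TransGen (ChainStep h 𝒱) a b}
      {b | Relation.TransGen (ChainStep h 𝒱) a b} :=
  fun _ hy => Relation.TransGen.tail hy (chainStep_apply_self hcov _)

theorem isClopen_setOf_transGen_chainStep [TopologicalSpace X] (hfin : 𝒱.Finite)
    (hclopen : ∀ V ∈ 𝒱, IsClopen V) (a : X) :
    IsClopen {b | Relation.TransGen (ChainStep h 𝒱) a b} := by
  have : {b | Relation.TransGen (ChainStep h 𝒱) a b} =
      ⋃ V ∈ {V ∈ 𝒱 | ∃ y, Relation.ReflTransGen (ChainStep h 𝒱) a y ∧ h y ∈ V}, V := by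
    ext b
    simp only [mem_ofPred_eq, Relation.TransGen.tail'_iff, ChainStep, mem_iUnion, exists_prop]
    constructor
    · rintro ⟨y, hay, V, hV, hyV, hbV⟩
      exact ⟨V, ⟨hV, y, hay, hyV⟩, hbV⟩
    · rintro ⟨V, ⟨hV, y, hay, hyV⟩, hbV⟩
      exact ⟨y, hay, V, hV, hyV, hbV⟩
  rw [this]
  exact (hfin.subset (sep_subset _ _)).isClopen_biUnion fun V hV => hclopen V hV.1

theorem chainTransitive_of_forall_not_mapsTo [TopologicalSpace X] [CompactSpace X] [T2Space X]
    [TotallyDisconnectedSpace X]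
    (H : ∀ A : Set X, IsClopen A → A.Nonempty → A ≠ univ → ¬MapsTo h A A) :
    ChainTransitive h := by
  refine chainTransitive_iff_transGen.2 fun a b 𝒰 hopen hcov => ?_
  obtain ⟨𝒱, h𝒱clopen, h𝒱fin, h𝒱cov, h𝒱𝒰⟩ :=
    isTopologicalBasis_isClopen.exists_finite_refinement hopen hcov
  have hreach : {b | Relation.TransGen (ChainStep h 𝒱) a b} = univ := by
    by_contra hne
    exact H _ (isClopen_setOf_transGen_chainStep h𝒱fin h𝒱clopen a)
      ⟨h a, .single (chainStep_apply_self h𝒱cov a)⟩ hne (mapsTo_setOf_transGen_chainStep h𝒱cov a)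
  exact Relation.TransGen.mono (ChainStep.mono h𝒱𝒰) _ _ (eq_univ_iff_forall.1 hreach b)

end ChainStep

/-- For a zero-dimensional compact Hausdorff space `X`, a homeomorphism `h` of `X`
is chain transitive iff `h[A] ⊄ A` for every clopen `A` with `A ≠ ∅`, `A ≠ X`. -/
theorem stmt_6 (X : Type*) [TopologicalSpace X] [CompactSpace X] [T2Space X]
    [TotallyDisconnectedSpace X] (h : X ≃ₜ X) :
    ChainTransitive ⇑h ↔
      ∀ A : Set X, IsClopen A → A ≠ ∅ → A ≠ univ → ¬(⇑h '' A ⊆ A) :=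
  ⟨fun hct _ hA hne hA_ne_univ hsub =>
      hct.not_mapsTo hA (nonempty_iff_ne_empty.2 hne) hA_ne_univ (mapsTo_iff_image_subset.2 hsub),
    fun H => chainTransitive_of_forall_not_mapsTo fun A hA hne hA_ne_univ hmaps =>
      H A hA hne.ne_empty hA_ne_univ hmaps.image_subset⟩
end
end
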